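/- arXiv:2110.03752 — 6 statements merged into one kernel-verified Lean document; each statement's English description precedes it below -/
import Mathlib

section
/- For any imaginary unit I ∈ 𝕊, the subspace topology induced by the slice topology τ_s(ℍ) on ℂ_I \ ℝ coincides with the Euclidean subspace topology on ℂ_I \ ℝ. -/
open scoped Quaternion

/-- The slice `ℂ_I = ℝ + ℝI` inside the quaternions. -/
def qslice (I : ℍ[ℝ]) : Set ℍ[ℝ] := {q | ∃ x y : ℝ, q = (x : ℍ[ℝ]) + y • I}

/-- The slice topology on `ℍ`: a set is open iff its preimage in every
slice `ℂ_I` (with its Euclidean topology) is open. -/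
noncomputable def sliceTopology : TopologicalSpace ℍ[ℝ] :=
  ⨆ I ∈ {I : ℍ[ℝ] | I ^ 2 = -1},
    TopologicalSpace.coinduced (Subtype.val : qslice I → ℍ[ℝ]) inferInstance

/-- The slice topology, restricted to a single slice `ℂ_I`, agrees with the
Euclidean subspace topology. -/
theorem induced_sliceTopology_eq (I : ℍ[ℝ]) (hI : I ^ 2 = -1) :
    TopologicalSpace.induced (Subtype.val : qslice I → ℍ[ℝ]) sliceTopology =
      TopologicalSpace.induced (Subtype.val : qslice I → ℍ[ℝ]) inferInstance := by
  apply le_antisymm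
  · exact induced_mono (iSup₂_le fun J hJ =>
      coinduced_le_iff_le_induced.mpr le_rfl)
  · calc TopologicalSpace.induced (Subtype.val : qslice I → ℍ[ℝ]) inferInstance
        ≤ TopologicalSpace.induced (Subtype.val : qslice I → ℍ[ℝ])
          (TopologicalSpace.coinduced (Subtype.val : qslice I → ℍ[ℝ]) inferInstance) :=
          (gc_coinduced_induced _).le_u_l _
      _ ≤ _ := induced_mono
          (le_iSup₂ (f := fun J (_ : J ∈ {J : ℍ[ℝ] | J ^ 2 = -1}) =>
            TopologicalSpace.coinduced (Subtype.val : qslice J → ℍ[ℝ]) inferInstance) I hI)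

/-- On `ℂ_I \ ℝ` the subspace topology induced by the slice topology coincides
with the Euclidean subspace topology. -/
theorem sliceTopology_eq_euclidean_off_reals (I : ℍ[ℝ]) (hI : I ^ 2 = -1) :
    TopologicalSpace.induced
        (Subtype.val : ↥(qslice I \ Set.range (fun r : ℝ => (r : ℍ[ℝ]))) → ℍ[ℝ])
        sliceTopology =
      TopologicalSpace.induced
        (Subtype.val : ↥(qslice I \ Set.range (fun r : ℝ => (r : ℍ[ℝ]))) → ℍ[ℝ])
        inferInstance := by
  have hsub : (qslice I \ Set.range (fun r : ℝ => (r : ℍ[ℝ]))) ⊆ qslice I := Set.diff_subset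
  have hval : (Subtype.val : ↥(qslice I \ Set.range (fun r : ℝ => (r : ℍ[ℝ]))) → ℍ[ℝ])
      = (Subtype.val : qslice I → ℍ[ℝ]) ∘ Set.inclusion hsub := rfl
  rw [hval, ← induced_compose, ← induced_compose, induced_sliceTopology_eq I hI]
end

section
/- The slice topology on ℍ is not metrizable: there is no metric d on ℍ whose induced topology equals the slice topology τ_s(ℍ). -/
open scoped Quaternion

/-!
Every quaternion lies in some slice, so every real line `ℝ q` is a continuous path in the slice
topology and every slice-neighbourhood of `0` contains nonzero points of each such line. Given
countably many neighbourhoods `B n` of `0`, pick a nonzero point of `B n` on the line through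
`n i + j`. Two such points never lie in a common slice, so their set meets each slice in at most
one point and is slice-closed; its complement is a neighbourhood of `0` containing no `B n`.
Thus `0` has no countable neighbourhood basis, whereas metric spaces are first countable.
-/

open Filter Topology Quaternion

theorem Quaternion.re_eq_zero_of_sq_eq_neg_one {I : ℍ[ℝ]} (hI : I ^ 2 = -1) : I.re = 0 := by
  rw [sq] at hI
  have hre := congrArg QuaternionAlgebra.re hI
  have hi := congrArg QuaternionAlgebra.imI hI
  have hj := congrArg QuaternionAlgebra.imJ hI
  have hk := congrArg QuaternionAlgebra.imK hI
  simp only [re_mul, imI_mul, imJ_mul, imK_mul, re_neg, imI_neg, imJ_neg, imK_neg, re_one,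
    imI_one, imJ_one, imK_one] at hre hi hj hk
  nlinarith [sq_nonneg I.imI, sq_nonneg I.imJ, sq_nonneg I.imK]

theorem Quaternion.exists_sq_eq_neg_one : ∃ I : ℍ[ℝ], I ^ 2 = -1 :=
  ⟨_, (by ext <;> simp [sq] : (⟨0, 1, 0, 0⟩ : ℍ[ℝ]) ^ 2 = -1)⟩

theorem coe_mem_qslice (x : ℝ) (I : ℍ[ℝ]) : (x : ℍ[ℝ]) ∈ qslice I :=
  ⟨x, 0, by rw [zero_smul, add_zero]⟩

theorem exists_sq_eq_neg_one_mem_qslice (q : ℍ[ℝ]) : ∃ I : ℍ[ℝ], I ^ 2 = -1 ∧ q ∈ qslice I := by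
  by_cases him : q.im = 0
  · obtain ⟨I, hI⟩ := exists_sq_eq_neg_one
    rw [← re_add_im q, him, add_zero]
    exact ⟨I, hI, coe_mem_qslice _ I⟩
  · have hnorm : ‖q.im‖ ≠ 0 := norm_ne_zero_iff.mpr him
    refine ⟨‖q.im‖⁻¹ • q.im, ?_, q.re, ‖q.im‖, ?_⟩
    · rw [smul_pow, im_sq, normSq_eq_norm_mul_self, smul_neg, ← coe_mul_eq_smul, ← coe_mul,
        inv_pow, sq, inv_mul_cancel₀ (mul_ne_zero hnorm hnorm), coe_one]
    · rw [smul_smul, mul_inv_cancel₀ hnorm, one_smul, re_add_im]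

theorem exists_eq_smul_of_smul_mem_qslice {I q : ℍ[ℝ]} (hI : I ^ 2 = -1) (hq : q.re = 0)
    {y : ℝ} (hy : y ≠ 0) (h : y • q ∈ qslice I) : ∃ c : ℝ, q = c • I := by
  obtain ⟨x, z, hxz⟩ := h
  have hx : x = 0 := by
    simpa [hq, re_eq_zero_of_sq_eq_neg_one hI] using (congrArg QuaternionAlgebra.re hxz).symm
  rw [hx, coe_zero, zero_add] at hxz
  refine ⟨y⁻¹ * z, ?_⟩
  rw [mul_smul, ← hxz, smul_smul, inv_mul_cancel₀ hy, one_smul]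

theorem continuous_smul_sliceTopology (q : ℍ[ℝ]) :
    Continuous[_, sliceTopology] fun y : ℝ ↦ y • q := by
  obtain ⟨I, hI, x, z, hq⟩ := exists_sq_eq_neg_one_mem_qslice q
  have hmem : ∀ y : ℝ, y • q ∈ qslice I := fun y ↦
    ⟨y * x, y * z, by rw [hq, smul_add, coe_mul, coe_mul_eq_smul, smul_smul]⟩
  have hline : Continuous fun y : ℝ ↦ y • q := continuous_id.smul continuous_const
  have hline_slice : Continuous fun y : ℝ ↦ (⟨y • q, hmem y⟩ : qslice I) :=
    hline.subtype_mk hmem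
  have hle := coinduced_mono (f := Subtype.val) hline_slice.coinduced_le
  rw [coinduced_compose] at hle
  unfold sliceTopology
  exact continuous_iSup_rng (i := I) (continuous_iSup_rng (i := hI)
    (continuous_iff_coinduced_le.2 hle))

theorem exists_ne_zero_smul_mem_of_mem_nhds_zero {U : Set ℍ[ℝ]}
    (hU : U ∈ @nhds _ sliceTopology 0) (q : ℍ[ℝ]) : ∃ y : ℝ, y ≠ 0 ∧ y • q ∈ U := by
  have hline := @Continuous.tendsto _ _ _ sliceTopology _ (continuous_smul_sliceTopology q) 0
  rw [zero_smul] at hline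
  have hnear : ∀ᶠ y : ℝ in 𝓝 0, y • q ∈ U := hline hU
  obtain ⟨y, hyU, hy⟩ :=
    (hnear.filter_mono (nhdsWithin_le_nhds (s := {0}ᶜ)) |>.and eventually_mem_nhdsWithin).exists
  exact ⟨y, hy, hyU⟩

theorem isClosed_sliceTopology_of_finite_inter {S : Set ℍ[ℝ]}
    (hS : ∀ I : ℍ[ℝ], I ^ 2 = -1 → (S ∩ qslice I).Finite) : IsClosed[sliceTopology] S := by
  unfold sliceTopology
  simp only [isClosed_iSup_iff, isClosed_coinduced]
  intro I hI
  have hfin : (Subtype.val ⁻¹' (S ∩ qslice I) : Set (qslice I)).Finite :=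
    (hS I hI).preimage Subtype.val_injective.injOn
  simpa using hfin.isClosed

def smulIAddJ (t : ℝ) : ℍ[ℝ] := ⟨0, t, 1, 0⟩

theorem smulIAddJ_ne_zero (t : ℝ) : smulIAddJ t ≠ 0 := fun h ↦ by
  simpa [smulIAddJ] using congrArg QuaternionAlgebra.imJ h

theorem eq_of_smul_smulIAddJ_mem_qslice {I : ℍ[ℝ]} (hI : I ^ 2 = -1) {s t y z : ℝ}
    (hy : y ≠ 0) (hz : z ≠ 0) (hs : y • smulIAddJ s ∈ qslice I)
    (ht : z • smulIAddJ t ∈ qslice I) : s = t := by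
  obtain ⟨c, hc⟩ := exists_eq_smul_of_smul_mem_qslice hI rfl hy hs
  obtain ⟨d, hd⟩ := exists_eq_smul_of_smul_mem_qslice hI rfl hz ht
  have hcI := congrArg QuaternionAlgebra.imI hc
  have hdI := congrArg QuaternionAlgebra.imI hd
  have hcJ := congrArg QuaternionAlgebra.imJ hc
  have hdJ := congrArg QuaternionAlgebra.imJ hd
  simp only [smulIAddJ, imI_smul, imJ_smul, smul_eq_mul] at hcI hdI hcJ hdJ
  have hJ : I.imJ ≠ 0 := fun h ↦ by simp [h] at hcJ
  have hcd : c = d := mul_right_cancel₀ hJ (hcJ.symm.trans hdJ)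
  rw [hcI, hdI, hcd]

theorem not_firstCountableTopology_sliceTopology :
    ¬ @FirstCountableTopology ℍ[ℝ] sliceTopology := by
  intro hfc
  obtain ⟨B, hB⟩ :=
    @exists_antitone_basis _ (@nhds _ sliceTopology 0) (hfc.nhds_generated_countable 0)
  choose y hy0 hyB using fun n : ℕ ↦
    exists_ne_zero_smul_mem_of_mem_nhds_zero (hB.mem n) (smulIAddJ n)
  set S := Set.range fun n ↦ y n • smulIAddJ n
  have hS : IsClosed[sliceTopology] S := by
    refine isClosed_sliceTopology_of_finite_inter fun I hI ↦ Set.Subsingleton.finite ?_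
    rintro _ ⟨⟨n, rfl⟩, hn⟩ _ ⟨⟨m, rfl⟩, hm⟩
    rw [Nat.cast_injective (eq_of_smul_smulIAddJ_mem_qslice hI (hy0 n) (hy0 m) hn hm)]
  have h0 : (0 : ℍ[ℝ]) ∉ S := by
    rintro ⟨n, hn⟩
    exact smul_ne_zero (hy0 n) (smulIAddJ_ne_zero n) hn
  obtain ⟨n, hn⟩ := hB.mem_iff.1 (@IsOpen.mem_nhds _ sliceTopology _ _ hS.isOpen_compl h0)
  exact hn (hyB n) ⟨n, rfl⟩

/-- The slice topology on `ℍ` is not metrizable: no metric induces it. -/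
theorem sliceTopology_not_metrizable :
    ¬ ∃ m : MetricSpace ℍ[ℝ], m.toUniformSpace.toTopologicalSpace = sliceTopology := by
  rintro ⟨m, hm⟩
  apply not_firstCountableTopology_sliceTopology
  rw [← hm]
  infer_instance
end

section
/- Every continuous path in ℍ with the Euclidean topology whose image is contained in a single slice ℂ_I (for some imaginary unit I) is also continuous as a path into ℍ with the slice topology. -/
open scoped Quaternion

/-- A Euclidean-continuous path whose image lies in one slice `ℂ_I` is also
continuous for the slice topology. -/
theorem path_on_slice_is_slice_path (γ : Set.Icc (0 : ℝ) 1 → ℍ[ℝ])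
    (hγ : Continuous γ) (I : ℍ[ℝ]) (hI : I ^ 2 = -1)
    (h : ∀ t, γ t ∈ qslice I) :
    @Continuous (Set.Icc (0 : ℝ) 1) ℍ[ℝ] _ sliceTopology γ := by
  have hle : TopologicalSpace.coinduced (Subtype.val : qslice I → ℍ[ℝ])
      instTopologicalSpaceSubtype ≤ sliceTopology := by
    unfold sliceTopology
    exact le_iSup₂ (f := fun (J : ℍ[ℝ]) (_ : J ∈ {I : ℍ[ℝ] | I ^ 2 = -1}) =>
      TopologicalSpace.coinduced (Subtype.val : qslice J → ℍ[ℝ]) inferInstance) I hI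
  have key : @Continuous _ _ _
      (TopologicalSpace.coinduced (Subtype.val : qslice I → ℍ[ℝ])
        instTopologicalSpaceSubtype) γ := by
    have heq : γ = Subtype.val ∘ (fun t => (⟨γ t, h t⟩ : qslice I)) := rfl
    rw [heq]
    exact @Continuous.comp _ _ _ _ instTopologicalSpaceSubtype
      (TopologicalSpace.coinduced (Subtype.val : qslice I → ℍ[ℝ])
        instTopologicalSpaceSubtype) _ _
      continuous_coinduced_rng (hγ.subtype_mk h)
  exact continuous_le_rng hle key
end

section
/- The σ-distance σ(q,p) on ℍ, defined as |q - p| if p and q lie on a common slice ℂ_I, and as sqrt((Re(q-p))² + |Im q|² + |Im p|²) otherwise, is a metric on ℍ, and every open set in the topology τ_σ induced by σ is slice-open (τ_σ ⊆ τ_s). -/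
/-!
Write `σ(q, p) = √((Re (q - p))² + d(Im q, Im p)²)`, where on the imaginary parts `d` is the
Euclidean distance along each line through `0` and `√(|u|² + |v|²)` across lines (two quaternions
share a slice exactly when their imaginary parts share such a line). The triangle inequality for
`d` comes from a case analysis on which pairs are collinear: collinearity through a common nonzero
point is transitive, so the mixed cases force a point to be `0`, and the remaining cases follow from
Minkowski's inequality in `ℝ²`. Minkowski's inequality once more lifts the triangle inequality from
`d` to `σ`. On each slice `σ` is the Euclidean distance, so σ-open sets are slice-open.
-/

open scoped Quaternion

/-- A set is slice-open if its trace on every slice `ℂ_I` is open. -/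
def SliceOpen (Ω : Set ℍ[ℝ]) : Prop :=
  ∀ I : ℍ[ℝ], I ^ 2 = -1 → IsOpen (Subtype.val ⁻¹' Ω : Set (qslice I))

open Classical in
/-- The σ-distance on `ℍ`. -/
noncomputable def sigmaDist (q p : ℍ[ℝ]) : ℝ :=
  if ∃ I : ℍ[ℝ], I ^ 2 = -1 ∧ q ∈ qslice I ∧ p ∈ qslice I then ‖q - p‖
  else Real.sqrt ((q - p).re ^ 2 + ‖q.im‖ ^ 2 + ‖p.im‖ ^ 2)

theorem Real.sqrt_sq_add_sq_add_le (a b c d : ℝ) :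
    √((a + b) ^ 2 + (c + d) ^ 2) ≤ √(a ^ 2 + c ^ 2) + √(b ^ 2 + d ^ 2) := by
  simpa [Complex.norm_eq_sqrt_sq_add_sq] using norm_add_le (⟨a, c⟩ : ℂ) ⟨b, d⟩

theorem Collinear.trans_of_ne {k V P : Type*} [Field k] [AddCommGroup V] [Module k V]
    [AddTorsor V P] {p u v w : P} (huv : Collinear k {p, u, v}) (hvw : Collinear k {p, v, w})
    (hv : v ≠ p) : Collinear k {p, u, w} :=
  collinear_triple_of_mem_affineSpan_pair (left_mem_affineSpan_pair k p v)
    (huv.mem_affineSpan_of_mem_of_ne (by simp) (by simp) (by simp) hv.symm)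
    (hvw.mem_affineSpan_of_mem_of_ne (by simp) (by simp) (by simp) hv.symm)

section LineDist

variable {V : Type*} [NormedAddCommGroup V] [NormedSpace ℝ V]

open Classical in
/-- Euclidean along each line through `0`; two points on different lines are measured as if
their lines were perpendicular. -/
noncomputable def lineDist (u v : V) : ℝ :=
  if Collinear ℝ ({0, u, v} : Set V) then ‖u - v‖ else √(‖u‖ ^ 2 + ‖v‖ ^ 2)

theorem lineDist_of_collinear {u v : V} (h : Collinear ℝ ({0, u, v} : Set V)) :
    lineDist u v = ‖u - v‖ :=
  if_pos h

theorem lineDist_of_not_collinear {u v : V} (h : ¬Collinear ℝ ({0, u, v} : Set V)) :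
    lineDist u v = √(‖u‖ ^ 2 + ‖v‖ ^ 2) :=
  if_neg h

theorem lineDist_comm (u v : V) : lineDist u v = lineDist v u := by
  by_cases h : Collinear ℝ ({0, u, v} : Set V)
  · have h' : Collinear ℝ ({0, v, u} : Set V) := by rwa [Set.pair_comm]
    rw [lineDist_of_collinear h, lineDist_of_collinear h', norm_sub_rev]
  · have h' : ¬Collinear ℝ ({0, v, u} : Set V) := by rwa [Set.pair_comm]
    rw [lineDist_of_not_collinear h, lineDist_of_not_collinear h', add_comm]

theorem lineDist_self (u : V) : lineDist u u = 0 := by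
  rw [lineDist_of_collinear (by simpa using collinear_pair ℝ (0 : V) u), sub_self, norm_zero]

theorem lineDist_zero_left (v : V) : lineDist 0 v = ‖v‖ := by
  rw [lineDist_of_collinear (by simpa using collinear_pair ℝ (0 : V) v), zero_sub, norm_neg]

theorem lineDist_nonneg (u v : V) : 0 ≤ lineDist u v := by
  unfold lineDist; split_ifs <;> positivity

theorem lineDist_le_norm_add_norm (u v : V) : lineDist u v ≤ ‖u‖ + ‖v‖ := by
  by_cases h : Collinear ℝ ({0, u, v} : Set V)
  · rw [lineDist_of_collinear h]; exact norm_sub_le u v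
  · rw [lineDist_of_not_collinear h, Real.sqrt_le_left (by positivity)]
    nlinarith [norm_nonneg u, norm_nonneg v]

theorem norm_left_le_lineDist {u v : V} (h : ¬Collinear ℝ ({0, u, v} : Set V)) :
    ‖u‖ ≤ lineDist u v := by
  rw [lineDist_of_not_collinear h]
  exact Real.le_sqrt_of_sq_le (le_add_of_nonneg_right (by positivity))

theorem norm_right_le_lineDist {u v : V} (h : ¬Collinear ℝ ({0, u, v} : Set V)) :
    ‖v‖ ≤ lineDist u v := by
  rw [lineDist_of_not_collinear h]
  exact Real.le_sqrt_of_sq_le (le_add_of_nonneg_left (by positivity))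

theorem norm_le_lineDist_add_norm (u v : V) : ‖u‖ ≤ lineDist u v + ‖v‖ := by
  by_cases h : Collinear ℝ ({0, u, v} : Set V)
  · rw [lineDist_of_collinear h]; exact norm_le_norm_sub_add u v
  · linarith [norm_left_le_lineDist h, norm_nonneg v]

theorem eq_of_lineDist_eq_zero {u v : V} (h : lineDist u v = 0) : u = v := by
  by_cases hc : Collinear ℝ ({0, u, v} : Set V)
  · rwa [lineDist_of_collinear hc, norm_sub_eq_zero_iff] at h
  · have hu := norm_left_le_lineDist hc
    have hv := norm_right_le_lineDist hc
    rw [h] at hu hv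
    rw [norm_le_zero_iff.1 hu, norm_le_zero_iff.1 hv]

theorem lineDist_triangle_of_not_collinear_right {u v w : V}
    (hvw : ¬Collinear ℝ ({0, v, w} : Set V)) : lineDist u w ≤ lineDist u v + lineDist v w := by
  by_cases huw : Collinear ℝ ({0, u, w} : Set V)
  · by_cases huv : Collinear ℝ ({0, u, v} : Set V)
    · obtain rfl : u = 0 := by
        by_contra hu
        exact hvw (Collinear.trans_of_ne (by rwa [Set.pair_comm]) huw hu)
      rw [lineDist_zero_left, lineDist_zero_left]
      linarith [norm_right_le_lineDist hvw, norm_nonneg v]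
    · rw [lineDist_of_collinear huw]
      linarith [norm_sub_le u w, norm_left_le_lineDist huv, norm_right_le_lineDist hvw]
  · rw [lineDist_of_not_collinear huw, lineDist_of_not_collinear hvw]
    calc √(‖u‖ ^ 2 + ‖w‖ ^ 2)
        ≤ √((lineDist u v + ‖v‖) ^ 2 + (0 + ‖w‖) ^ 2) := by
          gcongr
          · exact norm_le_lineDist_add_norm u v
          · rw [zero_add]
      _ ≤ √(lineDist u v ^ 2 + 0 ^ 2) + √(‖v‖ ^ 2 + ‖w‖ ^ 2) := Real.sqrt_sq_add_sq_add_le ..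
      _ = lineDist u v + √(‖v‖ ^ 2 + ‖w‖ ^ 2) := by
          rw [sq (0 : ℝ), mul_zero, add_zero, Real.sqrt_sq (lineDist_nonneg u v)]

theorem lineDist_triangle (u v w : V) : lineDist u w ≤ lineDist u v + lineDist v w := by
  by_cases hvw : Collinear ℝ ({0, v, w} : Set V)
  · by_cases huv : Collinear ℝ ({0, u, v} : Set V)
    · by_cases hv : v = 0
      · subst hv
        rw [lineDist_comm u 0, lineDist_zero_left, lineDist_zero_left]
        exact lineDist_le_norm_add_norm u w
      · rw [lineDist_of_collinear huv, lineDist_of_collinear hvw,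
          lineDist_of_collinear (huv.trans_of_ne hvw hv)]
        exact norm_sub_le_norm_sub_add_norm_sub u v w
    · have huv' : ¬Collinear ℝ ({0, v, u} : Set V) := by rwa [Set.pair_comm]
      rw [lineDist_comm u w, lineDist_comm u v, lineDist_comm v w, add_comm]
      exact lineDist_triangle_of_not_collinear_right huv'
  · exact lineDist_triangle_of_not_collinear_right hvw

end LineDist

namespace Quaternion

theorem sq_eq_neg_one_iff {I : ℍ[ℝ]} : I ^ 2 = -1 ↔ I.re = 0 ∧ normSq I = 1 := by
  constructor
  · intro h
    have hn : normSq I = 1 := by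
      rw [← pow_eq_one_iff_of_nonneg normSq_nonneg two_ne_zero, ← map_pow, h, normSq_neg,
        map_one]
    exact ⟨sq_eq_neg_normSq.1 (by rw [h, hn, coe_one]), hn⟩
  · rintro ⟨hre, hn⟩
    rw [sq_eq_neg_normSq.2 hre, hn, coe_one]

theorem exists_sq_eq_neg_one_and_eq_smul {u : ℍ[ℝ]} (hu : u.re = 0) :
    ∃ I : ℍ[ℝ], I ^ 2 = -1 ∧ ∃ t : ℝ, u = t • I := by
  rcases eq_or_ne u 0 with rfl | hu0
  · exact ⟨⟨0, 1, 0, 0⟩, sq_eq_neg_one_iff.2 ⟨rfl, (normSq_def' _).trans (by norm_num)⟩, 0,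
      (zero_smul ℝ _).symm⟩
  · have hnorm : ‖u‖ ≠ 0 := norm_ne_zero_iff.2 hu0
    refine ⟨‖u‖⁻¹ • u, sq_eq_neg_one_iff.2 ⟨by simp [hu], ?_⟩, ‖u‖, ?_⟩
    · rw [normSq_eq_norm_mul_self, norm_smul, norm_inv, norm_norm, inv_mul_cancel₀ hnorm,
        mul_one]
    · rw [smul_smul, mul_inv_cancel₀ hnorm, one_smul]

theorem norm_eq_sqrt_re_sq_add_norm_im_sq (q : ℍ[ℝ]) : ‖q‖ = √(q.re ^ 2 + ‖q.im‖ ^ 2) := by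
  rw [norm_eq_sqrt_real_inner, inner_self, sq ‖q.im‖, ← normSq_eq_norm_mul_self, normSq_def',
    normSq_def']
  simp only [re_im, imI_im, imJ_im, imK_im]
  ring_nf

end Quaternion

open Quaternion

theorem mem_qslice_iff {I : ℍ[ℝ]} (hI : I.re = 0) (q : ℍ[ℝ]) :
    q ∈ qslice I ↔ ∃ y : ℝ, q.im = y • I := by
  have hIm : I.im = I := by simpa [hI] using re_add_im I
  constructor
  · rintro ⟨x, y, rfl⟩
    exact ⟨y, by rw [im_add, im_coe, im_smul, hIm, zero_add]⟩
  · rintro ⟨y, hy⟩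
    exact ⟨q.re, y, by rw [← hy, re_add_im]⟩

theorem exists_qslice_iff_collinear (q p : ℍ[ℝ]) :
    (∃ I : ℍ[ℝ], I ^ 2 = -1 ∧ q ∈ qslice I ∧ p ∈ qslice I) ↔
      Collinear ℝ ({0, q.im, p.im} : Set ℍ[ℝ]) := by
  simp only [collinear_iff_of_mem (Set.mem_insert (0 : ℍ[ℝ]) _), Set.mem_insert_iff,
    Set.mem_singleton_iff, forall_eq_or_imp, forall_eq, vadd_eq_add, add_zero]
  constructor
  · rintro ⟨I, hI, hq, hp⟩
    have hre := (sq_eq_neg_one_iff.1 hI).1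
    exact ⟨I, ⟨0, (zero_smul ℝ I).symm⟩, (mem_qslice_iff hre q).1 hq, (mem_qslice_iff hre p).1 hp⟩
  · rintro ⟨v, -, ⟨a, ha⟩, ⟨b, hb⟩⟩
    obtain ⟨I, hI, t, ht⟩ := exists_sq_eq_neg_one_and_eq_smul (re_im v)
    have hre := (sq_eq_neg_one_iff.1 hI).1
    have hv : ∀ (w : ℍ[ℝ]) (c : ℝ), w.im = c • v → w ∈ qslice I := fun w c hw =>
      (mem_qslice_iff hre w).2 ⟨c * t, by rw [← im_idem, hw, im_smul, ht, smul_smul]⟩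
    exact ⟨I, hI, hv q a ha, hv p b hb⟩

theorem sigmaDist_eq_sqrt (q p : ℍ[ℝ]) :
    sigmaDist q p = √((q - p).re ^ 2 + lineDist q.im p.im ^ 2) := by
  unfold sigmaDist
  split_ifs with h
  · rw [lineDist_of_collinear ((exists_qslice_iff_collinear q p).1 h),
      norm_eq_sqrt_re_sq_add_norm_im_sq, im_sub]
  · rw [lineDist_of_not_collinear (mt (exists_qslice_iff_collinear q p).2 h),
      Real.sq_sqrt (by positivity), add_assoc]

theorem sigmaDist_eq_norm_of_mem_qslice {I q p : ℍ[ℝ]} (hI : I ^ 2 = -1) (hq : q ∈ qslice I)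
    (hp : p ∈ qslice I) : sigmaDist q p = ‖q - p‖ :=
  if_pos ⟨I, hI, hq, hp⟩

theorem sigmaDist_self (q : ℍ[ℝ]) : sigmaDist q q = 0 := by
  simp [sigmaDist_eq_sqrt, lineDist_self]

theorem eq_of_sigmaDist_eq_zero {q p : ℍ[ℝ]} (h : sigmaDist q p = 0) : q = p := by
  rw [sigmaDist_eq_sqrt, Real.sqrt_eq_zero (by positivity),
    add_eq_zero_iff_of_nonneg (sq_nonneg _) (sq_nonneg _)] at h
  obtain ⟨hre, him⟩ := h
  rw [← re_add_im q, ← re_add_im p, eq_of_lineDist_eq_zero (pow_eq_zero_iff two_ne_zero |>.1 him),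
    sub_eq_zero.1 (pow_eq_zero_iff two_ne_zero |>.1 hre)]

theorem sigmaDist_comm (q p : ℍ[ℝ]) : sigmaDist q p = sigmaDist p q := by
  rw [sigmaDist_eq_sqrt, sigmaDist_eq_sqrt, lineDist_comm, ← neg_sub p q, re_neg, neg_sq]

theorem sigmaDist_triangle (q p r : ℍ[ℝ]) : sigmaDist q r ≤ sigmaDist q p + sigmaDist p r := by
  simp only [sigmaDist_eq_sqrt]
  calc √((q - r).re ^ 2 + lineDist q.im r.im ^ 2)
      ≤ √(((q - p).re + (p - r).re) ^ 2 + (lineDist q.im p.im + lineDist p.im r.im) ^ 2) := by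
        rw [← re_add, sub_add_sub_cancel]
        gcongr
        · exact lineDist_nonneg _ _
        · exact lineDist_triangle _ _ _
    _ ≤ _ := Real.sqrt_sq_add_sq_add_le ..

theorem sliceOpen_of_forall_sigmaDist_lt {Ω : Set ℍ[ℝ]}
    (hΩ : ∀ q ∈ Ω, ∃ ε > (0 : ℝ), ∀ p : ℍ[ℝ], sigmaDist q p < ε → p ∈ Ω) : SliceOpen Ω := by
  intro I hI
  rw [Metric.isOpen_iff]
  rintro ⟨q, hq⟩ hqΩ
  obtain ⟨ε, hε, hball⟩ := hΩ q hqΩ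
  refine ⟨ε, hε, fun ⟨p, hp⟩ hpq => hball p ?_⟩
  rwa [sigmaDist_eq_norm_of_mem_qslice hI hq hp, ← dist_eq_norm, dist_comm]

/-- The σ-distance is a metric on `ℍ`, and every σ-open set is slice-open
(`τ_σ ⊆ τ_s`). -/
theorem sigmaDist_metric_and_sigma_open_sliceOpen :
    (∀ q : ℍ[ℝ], sigmaDist q q = 0) ∧
    (∀ q p : ℍ[ℝ], sigmaDist q p = 0 → q = p) ∧
    (∀ q p : ℍ[ℝ], sigmaDist q p = sigmaDist p q) ∧
    (∀ q p r : ℍ[ℝ], sigmaDist q r ≤ sigmaDist q p + sigmaDist p r) ∧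
    (∀ Ω : Set ℍ[ℝ],
      (∀ q ∈ Ω, ∃ ε > (0 : ℝ), ∀ p : ℍ[ℝ], sigmaDist q p < ε → p ∈ Ω) →
      SliceOpen Ω) :=
  ⟨sigmaDist_self, fun _ _ => eq_of_sigmaDist_eq_zero, sigmaDist_comm, sigmaDist_triangle,
    fun _ => sliceOpen_of_forall_sigmaDist_lt⟩
end

section
/- Let f : Ω → ℍ be path-slice, γ ∈ 𝒫(ℂ,Ω), and I, J, K ∈ 𝕊(γ,Ω) with J ≠ K. Then for all t ∈ [0,1]: f(γ^I(t)) = (J-K)⁻¹(J·f(γ^J(t)) - K·f(γ^K(t))) + I·(J-K)⁻¹(f(γ^J(t)) - f(γ^K(t))). -/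
open scoped Quaternion

/-- Embedding of `ℂ` into the slice `ℂ_I` of the quaternions. -/
noncomputable def injC (I : ℍ[ℝ]) (z : ℂ) : ℍ[ℝ] := (z.re : ℍ[ℝ]) + z.im • I

/-- `𝕊(γ, Ω)`: the imaginary units `I` for which the lift `γ^I` stays in `Ω`. -/
def sliceSet (Ω : Set ℍ[ℝ]) (γ : Set.Icc (0 : ℝ) 1 → ℂ) : Set ℍ[ℝ] :=
  {I | I ^ 2 = -1 ∧ ∀ t, injC I (γ t) ∈ Ω}

/-- `γ ∈ 𝒫(ℂ, Ω)`: a continuous path starting on `ℝ` whose lift `γ^I` lies in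
`Ω` for some imaginary unit `I`. -/
def IsPathIn (Ω : Set ℍ[ℝ]) (γ : Set.Icc (0 : ℝ) 1 → ℂ) : Prop :=
  Continuous γ ∧ (γ ⟨0, by norm_num⟩).im = 0 ∧ (sliceSet Ω γ).Nonempty

/-- `f` is path-slice: it has a path-slice stem function. -/
def IsPathSlice (Ω : Set ℍ[ℝ]) (f : ℍ[ℝ] → ℍ[ℝ]) : Prop :=
  ∃ F : (Set.Icc (0 : ℝ) 1 → ℂ) → ℍ[ℝ] × ℍ[ℝ],
    ∀ γ, IsPathIn Ω γ → ∀ I ∈ sliceSet Ω γ,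
      f (injC I (γ ⟨1, by norm_num⟩)) = (F γ).1 + I * (F γ).2

/-! Restricting `γ` to `[0, t]` gives a path in `𝒫(ℂ, Ω)` ending at `γ(t)` with at least the same
admissible units, so the path-slice property yields `q₁, q₂` with `f(γ^L(t)) = q₁ + L q₂` for every
`L ∈ 𝕊(γ, Ω)`. Since `J² = K² = -1`, the two equations for `J` and `K` are solved by
`q₁ = (J - K)⁻¹ (J f(γ^J(t)) - K f(γ^K(t)))` and `q₂ = (J - K)⁻¹ (f(γ^J(t)) - f(γ^K(t)))`. -/

section SliceSolve

variable {R : Type*} {J K : R}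

theorem mul_add_mul_sub_mul_add_mul [Ring R] (hJ : J * J = -1) (hK : K * K = -1) (a b : R) :
    J * (a + J * b) - K * (a + K * b) = (J - K) * a := by
  rw [mul_add, mul_add, ← mul_assoc, ← mul_assoc, hJ, hK, sub_mul]
  noncomm_ring

theorem inv_sub_mul_add_mul_inv_sub_mul_eq [DivisionRing R] (hJ : J * J = -1) (hK : K * K = -1)
    (hJK : J ≠ K) (a b I : R) :
    (J - K)⁻¹ * (J * (a + J * b) - K * (a + K * b)) +
        I * ((J - K)⁻¹ * ((a + J * b) - (a + K * b))) = a + I * b := by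
  have hne : J - K ≠ 0 := sub_ne_zero.mpr hJK
  rw [mul_add_mul_sub_mul_add_mul hJ hK, add_sub_add_left_eq_sub, ← sub_mul,
    inv_mul_cancel_left₀ hne, inv_mul_cancel_left₀ hne]

end SliceSolve

def restrictPath (γ : Set.Icc (0 : ℝ) 1 → ℂ) (t : Set.Icc (0 : ℝ) 1) :
    Set.Icc (0 : ℝ) 1 → ℂ :=
  fun s => γ (t * s)

theorem restrictPath_one (γ : Set.Icc (0 : ℝ) 1 → ℂ) (t : Set.Icc (0 : ℝ) 1) :
    restrictPath γ t ⟨1, by norm_num⟩ = γ t :=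
  congrArg γ (mul_one t)

theorem restrictPath_zero (γ : Set.Icc (0 : ℝ) 1 → ℂ) (t : Set.Icc (0 : ℝ) 1) :
    restrictPath γ t ⟨0, by norm_num⟩ = γ ⟨0, by norm_num⟩ :=
  congrArg γ (mul_zero t)

theorem sliceSet_subset_restrictPath (Ω : Set ℍ[ℝ]) (γ : Set.Icc (0 : ℝ) 1 → ℂ)
    (t : Set.Icc (0 : ℝ) 1) : sliceSet Ω γ ⊆ sliceSet Ω (restrictPath γ t) :=
  fun _ hL => ⟨hL.1, fun s => hL.2 (t * s)⟩

theorem IsPathIn.restrictPath {Ω : Set ℍ[ℝ]} {γ : Set.Icc (0 : ℝ) 1 → ℂ} (hγ : IsPathIn Ω γ)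
    (t : Set.Icc (0 : ℝ) 1) : IsPathIn Ω (restrictPath γ t) := by
  refine ⟨?_, ?_, hγ.2.2.mono (sliceSet_subset_restrictPath Ω γ t)⟩
  · exact hγ.1.comp ((continuous_const.mul continuous_subtype_val).subtype_mk _)
  · rw [restrictPath_zero]
    exact hγ.2.1

theorem IsPathSlice.exists_eq_add_mul {Ω : Set ℍ[ℝ]} {f : ℍ[ℝ] → ℍ[ℝ]} (hf : IsPathSlice Ω f)
    {γ : Set.Icc (0 : ℝ) 1 → ℂ} (hγ : IsPathIn Ω γ) (t : Set.Icc (0 : ℝ) 1) :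
    ∃ a b : ℍ[ℝ], ∀ L ∈ sliceSet Ω γ, f (injC L (γ t)) = a + L * b := by
  obtain ⟨F, hF⟩ := hf
  refine ⟨(F (restrictPath γ t)).1, (F (restrictPath γ t)).2, fun L hL => ?_⟩
  rw [← restrictPath_one γ t]
  exact hF _ (hγ.restrictPath t) L (sliceSet_subset_restrictPath Ω γ t hL)

/-- Representation formula along a path: if `f` is path-slice then for all
`I, J, K ∈ 𝕊(γ, Ω)` with `J ≠ K` and every `t ∈ [0,1]`,
`f(γ^I(t)) = (J-K)⁻¹(J f(γ^J(t)) - K f(γ^K(t))) + I (J-K)⁻¹(f(γ^J(t)) - f(γ^K(t)))`. -/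
theorem pathSlice_representation (Ω : Set ℍ[ℝ]) (f : ℍ[ℝ] → ℍ[ℝ])
    (hf : IsPathSlice Ω f) (γ : Set.Icc (0 : ℝ) 1 → ℂ) (hγ : IsPathIn Ω γ)
    (I J K : ℍ[ℝ]) (hI : I ∈ sliceSet Ω γ) (hJ : J ∈ sliceSet Ω γ)
    (hK : K ∈ sliceSet Ω γ) (hJK : J ≠ K) (t : Set.Icc (0 : ℝ) 1) :
    f (injC I (γ t)) =
      (J - K)⁻¹ * (J * f (injC J (γ t)) - K * f (injC K (γ t))) +
        I * ((J - K)⁻¹ * (f (injC J (γ t)) - f (injC K (γ t)))) := by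
  obtain ⟨a, b, hab⟩ := hf.exists_eq_add_mul hγ t
  rw [hab I hI, hab J hJ, hab K hK]
  exact (inv_sub_mul_add_mul_inv_sub_mul_eq (sq J ▸ hJ.1) (sq K ▸ hK.1) hJK a b I).symm
end

section
/- Let C be a set of complex structures on ℝ^{2n} with C = -C, and let Ω ⊆ W_C := ⋃_{I∈C} ℂ_I (with ℂ_I := ℝ + ℝI ⊆ End(ℝ^{2n})) be axially symmetric, i.e. x + yI ∈ Ω implies x + yJ ∈ Ω for all J ∈ C. If f : Ω → ℝ^{2n} is path-slice, then f is a slice function: there exists F : Ω_s → (ℝ^{2n})² with f(x + yI) = F₁(x+yi) + I F₂(x+yi) for all x + yI ∈ Ω, provided Ω is a slice-domain (slice-open and slice-connected). -/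
/-!
By axial symmetry every slice of `Ω` is the same open set `U ⊆ ℂ` read in its own chart, and
`U` is closed under conjugation because `x + yJ = x + (-y)(-J)`. Two charts meet only in pairs
`z, z̄` (`x + yI = x' + y'J` forces `x = x'` and `y = ±y'`), so a conjugation-invariant subset of
`U` that is clopen in `U` lifts to a slice-clopen subset of `Ω`, and connectedness of `Ω` makes
the path component in `U` of a real point all of `U`. A real point exists: otherwise, since
`I ≠ J` forces `x + yI ≠ x + yJ` when `y ≠ 0`, the upper half of `U` seen in the single chart of
one `I₀` would be a proper slice-clopen subset of `Ω`. The path-slice property along a path in `U`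
from a real point to `z` then yields one pair `F z` serving every `J ∈ C` at once.
-/

/-- Embedding of `ℂ` into the slice `ℝ + ℝI ⊆ End(ℝ^{2n})`. -/
noncomputable def injE (n : ℕ) (I : Module.End ℝ (Fin (2 * n) → ℝ)) (z : ℂ) :
    Module.End ℝ (Fin (2 * n) → ℝ) :=
  z.re • 1 + z.im • I

/-- The slice topology on `End(ℝ^{2n})` associated with a set `C` of complex
structures: a set is open iff its preimage under every chart `ℂ → ℂ_I` is open. -/
noncomputable def sliceTopologyC (n : ℕ)
    (C : Set (Module.End ℝ (Fin (2 * n) → ℝ))) :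
    TopologicalSpace (Module.End ℝ (Fin (2 * n) → ℝ)) :=
  ⨆ I ∈ C, TopologicalSpace.coinduced (injE n I) inferInstance

open ComplexConjugate Topology

namespace Complex

variable {A : Type*} [Ring A] [Algebra ℝ A]

theorem lift_injective [Nontrivial A] (K : {x : A // x * x = -1}) :
    Function.Injective (lift K) :=
  (lift K).toRingHom.injective

theorem lift_ofReal (K L : {x : A // x * x = -1}) (r : ℝ) : lift K r = lift L r := by
  rw [← coe_algebraMap, AlgHom.commutes, AlgHom.commutes]

theorem eq_or_eq_conj_of_lift_eq_lift [Nontrivial A] {K L : {x : A // x * x = -1}} {z w : ℂ}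
    (h : lift K z = lift L w) : w = z ∨ w = conj z := by
  have hw : w - w.re = w.im * I := by apply Complex.ext <;> simp
  have hsq : (z - w.re) ^ 2 = (w.im * I) ^ 2 := by
    have hreal : (w.im * I) ^ 2 = ((-w.im ^ 2 : ℝ) : ℂ) := by push_cast; ring_nf; simp
    apply lift_injective K
    rw [hreal, lift_ofReal K L, ← hreal, ← hw, map_pow, map_pow, map_sub, map_sub, h,
      lift_ofReal K L]
  rcases sq_eq_sq_iff_eq_or_eq_neg.mp hsq with h' | h' <;>
    obtain ⟨hre, him⟩ := Complex.ext_iff.mp h'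
  · left; apply Complex.ext <;> simp at hre him ⊢ <;> linarith
  · right; apply Complex.ext <;> simp at hre him ⊢ <;> linarith

end Complex

section injE

variable {n : ℕ} {I J : Module.End ℝ (Fin (2 * n) → ℝ)}

theorem injE_eq_lift (hI : I * I = -1) : injE n I = Complex.lift ⟨I, hI⟩ := by
  funext z
  simp [injE, Algebra.algebraMap_eq_smul_one]

theorem injE_injective [Nontrivial (Fin (2 * n) → ℝ)] (hI : I * I = -1) :
    Function.Injective (injE n I) := by
  rw [injE_eq_lift hI]
  exact Complex.lift_injective _

theorem eq_or_eq_conj_of_injE_eq_injE [Nontrivial (Fin (2 * n) → ℝ)] (hI : I * I = -1)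
    (hJ : J * J = -1) {z w : ℂ} (h : injE n I z = injE n J w) : w = z ∨ w = conj z := by
  rw [injE_eq_lift hI, injE_eq_lift hJ] at h
  exact Complex.eq_or_eq_conj_of_lift_eq_lift h

theorem injE_conj (I : Module.End ℝ (Fin (2 * n) → ℝ)) (z : ℂ) :
    injE n I (conj z) = injE n (-I) z := by
  simp only [injE, Complex.conj_re, Complex.conj_im]
  module

theorem injE_left_injective {z : ℂ} (hz : z.im ≠ 0) :
    Function.Injective fun I : Module.End ℝ (Fin (2 * n) → ℝ) ↦ injE n I z := by
  intro I J h
  simpa [injE, hz] using h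

theorem isOpen_sliceTopologyC_iff {C s : Set (Module.End ℝ (Fin (2 * n) → ℝ))} :
    IsOpen[sliceTopologyC n C] s ↔ ∀ I ∈ C, IsOpen (injE n I ⁻¹' s) := by
  unfold sliceTopologyC
  simp only [isOpen_iSup_iff, isOpen_coinduced]

end injE

theorem IsOpen.diff_pathComponentIn {X : Type*} [TopologicalSpace X] [LocallyPathConnectedSpace X]
    {F : Set X} (hF : IsOpen F) (x : X) : IsOpen (F \ pathComponentIn F x) := by
  rw [isOpen_iff_mem_nhds]
  rintro y ⟨hyF, hyx⟩
  filter_upwards [pathComponentIn_mem_nhds (hF.mem_nhds hyF)] with z hz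
  exact ⟨pathComponentIn_subset hz, fun hzx => hyx (JoinedIn.trans hzx (JoinedIn.symm hz))⟩

theorem Set.union_sdiff_inter_setOf_union {α : Type*} {P N : Set α} (h : Disjoint P N)
    (p q : Prop) :
    (P ∪ N) \ (P ∩ {_x | p} ∪ N ∩ {_x | q}) = P ∩ {_x | ¬p} ∪ N ∩ {_x | ¬q} := by
  ext x
  have : x ∈ P → x ∉ N := fun hx => Set.disjoint_left.1 h hx
  simp only [Set.mem_sdiff, Set.mem_union, Set.mem_inter_iff, Set.mem_ofPred_eq]
  tauto

def axialSet (n : ℕ) (C : Set (Module.End ℝ (Fin (2 * n) → ℝ))) (S : Set ℂ) :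
    Set (Module.End ℝ (Fin (2 * n) → ℝ)) :=
  ⋃ I ∈ C, injE n I '' S

section SliceDomain

open Set

variable {n : ℕ} {C Ω : Set (Module.End ℝ (Fin (2 * n) → ℝ))} {U : Set ℂ}

theorem subset_of_isPreconnected_sliceTopologyC (hΩ : @IsPreconnected _ (sliceTopologyC n C) Ω)
    (hU : ∀ J ∈ C, injE n J ⁻¹' Ω = U) {T : Set (Module.End ℝ (Fin (2 * n) → ℝ))}
    (hT : ∀ J ∈ C, IsOpen (U ∩ injE n J ⁻¹' T) ∧ IsOpen (U \ injE n J ⁻¹' T))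
    (hne : (Ω ∩ T).Nonempty) : Ω ⊆ T := by
  let _ := sliceTopologyC n C
  have hsub := hΩ.subset_left_of_subset_union (u := Ω ∩ T) (v := Ω \ T)
    (isOpen_sliceTopologyC_iff.2 fun J hJ => by rw [preimage_inter, hU J hJ]; exact (hT J hJ).1)
    (isOpen_sliceTopologyC_iff.2 fun J hJ => by rw [preimage_sdiff, hU J hJ]; exact (hT J hJ).2)
    disjoint_sdiff_inter.symm (inter_union_sdiff Ω T).symm.subset
    (by rwa [← inter_assoc, inter_self])
  exact fun x hx => (hsub hx).2

variable [Nontrivial (Fin (2 * n) → ℝ)]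

theorem preimage_injE_axialSet (hC : ∀ I ∈ C, I * I = -1) {J : Module.End ℝ (Fin (2 * n) → ℝ)}
    (hJ : J ∈ C) {S : Set ℂ} (hS : ∀ z ∈ S, conj z ∈ S) : injE n J ⁻¹' axialSet n C S = S := by
  ext z
  simp only [axialSet, mem_preimage, mem_iUnion, mem_image, exists_prop]
  constructor
  · rintro ⟨I, hI, w, hw, h⟩
    rcases eq_or_eq_conj_of_injE_eq_injE (hC I hI) (hC J hJ) h with rfl | rfl
    · exact hw
    · exact hS w hw
  · exact fun hz => ⟨J, hJ, z, hz, rfl⟩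

theorem preimage_injE_image {I J : Module.End ℝ (Fin (2 * n) → ℝ)} (hI : I * I = -1)
    (hJ : J * J = -1) {S : Set ℂ} (hS : ∀ z ∈ S, z.im ≠ 0) :
    injE n J ⁻¹' (injE n I '' S) = S ∩ {_z | J = I} ∪ conj ⁻¹' S ∩ {_z | J = -I} := by
  ext z
  simp only [mem_preimage, mem_image, mem_union, mem_inter_iff, mem_ofPred_eq]
  constructor
  · rintro ⟨w, hw, h⟩
    rcases eq_or_eq_conj_of_injE_eq_injE hI hJ h with rfl | rfl
    · exact Or.inl ⟨hw, injE_left_injective (hS _ hw) h.symm⟩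
    · refine Or.inr ⟨by rwa [Complex.conj_conj],
        injE_left_injective (z := conj w) (by simpa using hS _ hw) ?_⟩
      change injE n J (conj w) = injE n (-I) (conj w)
      rw [← h, injE_conj, neg_neg]
  · rintro (⟨hz, rfl⟩ | ⟨hz, rfl⟩)
    · exact ⟨z, hz, rfl⟩
    · exact ⟨conj z, hz, injE_conj I z⟩

theorem exists_ofReal_mem (hC : ∀ I ∈ C, I * I = -1)
    (hΩ : @IsPreconnected _ (sliceTopologyC n C) Ω) (hU : ∀ J ∈ C, injE n J ⁻¹' Ω = U)
    (hUo : IsOpen U) (hUconj : ∀ z ∈ U, conj z ∈ U) {I₀ : Module.End ℝ (Fin (2 * n) → ℝ)}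
    (hI₀ : I₀ ∈ C) (hne : U.Nonempty) : ∃ x : ℝ, (x : ℂ) ∈ U := by
  by_contra! hreal
  set P := U ∩ {z | 0 < z.im}
  have hPo : IsOpen P := hUo.inter (isOpen_lt continuous_const Complex.continuous_im)
  have hPN : Disjoint P (conj ⁻¹' P) := disjoint_left.2 fun z hz hz' => by
    have := hz'.2
    simp only [mem_ofPred_eq, Complex.conj_im] at this
    linarith [hz.2.out]
  have hUPN : U = P ∪ conj ⁻¹' P := by
    refine Subset.antisymm (fun z hz => ?_) (union_subset inter_subset_left fun z hz => ?_)
    · have hz0 : z.im ≠ 0 := fun h0 =>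
        hreal z.re (by rwa [Complex.conj_eq_iff_re.1 (Complex.conj_eq_iff_im.2 h0)])
      rcases hz0.lt_or_gt with h | h
      · exact Or.inr ⟨hUconj z hz, by simpa using h⟩
      · exact Or.inl ⟨hz, h⟩
    · simpa using hUconj _ hz.1
  have hT : ∀ J ∈ C, injE n J ⁻¹' (injE n I₀ '' P) =
      P ∩ {_z | J = I₀} ∪ conj ⁻¹' P ∩ {_z | J = -I₀} := fun J hJ =>
    preimage_injE_image (hC I₀ hI₀) (hC J hJ) fun z hz => (hz.2.out : 0 < z.im).ne'
  have hTo : ∀ p q : Prop, IsOpen (P ∩ {_z | p} ∪ conj ⁻¹' P ∩ {_z | q}) := fun p q =>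
    (hPo.inter isOpen_const).union ((hPo.preimage Complex.continuous_conj).inter isOpen_const)
  obtain ⟨zp, hzp⟩ : P.Nonempty := by
    obtain ⟨z, hz⟩ := hne
    rw [hUPN] at hz
    exact hz.elim (fun h => ⟨z, h⟩) fun h => ⟨conj z, h⟩
  have hΩT : Ω ⊆ injE n I₀ '' P := by
    refine subset_of_isPreconnected_sliceTopologyC hΩ hU (fun J hJ => ?_)
      ⟨injE n I₀ zp, (hU I₀ hI₀).symm.subset hzp.1, zp, hzp, rfl⟩
    rw [hT J hJ, hUPN, union_sdiff_inter_setOf_union hPN]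
    exact ⟨(hPo.union (hPo.preimage Complex.continuous_conj)).inter (hTo _ _), hTo _ _⟩
  obtain ⟨w, hw, h⟩ := hΩT ((hU I₀ hI₀).symm.subset (hUconj zp hzp.1))
  rw [injE_injective (hC I₀ hI₀) h] at hw
  exact disjoint_left.1 hPN hzp hw

theorem subset_pathComponentIn_ofReal (hC : ∀ I ∈ C, I * I = -1)
    (hΩ : @IsPreconnected _ (sliceTopologyC n C) Ω) (hU : ∀ J ∈ C, injE n J ⁻¹' Ω = U)
    (hUo : IsOpen U) (hUconj : ∀ z ∈ U, conj z ∈ U) {I₀ : Module.End ℝ (Fin (2 * n) → ℝ)}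
    (hI₀ : I₀ ∈ C) {x₀ : ℝ} (hx₀ : (x₀ : ℂ) ∈ U) : U ⊆ pathComponentIn U x₀ := by
  set R := pathComponentIn U (x₀ : ℂ)
  have hRconj : ∀ z ∈ R, conj z ∈ R := fun z hz => by
    have := (hz : JoinedIn U x₀ z).map Complex.continuous_conj
    rw [Complex.conj_ofReal] at this
    exact this.mono (image_subset_iff.2 hUconj)
  have hsub : Ω ⊆ axialSet n C R := by
    refine subset_of_isPreconnected_sliceTopologyC hΩ hU (fun J hJ => ?_) ⟨injE n I₀ x₀,
      (hU I₀ hI₀).symm.subset hx₀, mem_biUnion hI₀ ⟨x₀, mem_pathComponentIn_self hx₀, rfl⟩⟩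
    rw [preimage_injE_axialSet hC hJ hRconj, inter_eq_right.2 pathComponentIn_subset]
    exact ⟨hUo.pathComponentIn _, hUo.diff_pathComponentIn _⟩
  intro z hz
  rw [← hU I₀ hI₀] at hz
  exact (preimage_injE_axialSet hC hI₀ hRconj).subset (hsub hz)

end SliceDomain

/-- On an axially symmetric slice-domain `Ω ⊆ W_C`, every path-slice function
`f : Ω → ℝ^{2n}` is a slice function. -/
theorem slice_of_pathSlice_on_axially_symmetric (n : ℕ)
    (C : Set (Module.End ℝ (Fin (2 * n) → ℝ)))
    (hC : ∀ I ∈ C, I * I = -1) (hCneg : ∀ I ∈ C, -I ∈ C)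
    (Ω : Set (Module.End ℝ (Fin (2 * n) → ℝ)))
    (haxial : ∀ z : ℂ, ∀ I ∈ C, injE n I z ∈ Ω → ∀ J ∈ C, injE n J z ∈ Ω)
    (hopen : @IsOpen _ (sliceTopologyC n C) Ω)
    (hconn : @IsConnected _ (sliceTopologyC n C) Ω)
    (f : Module.End ℝ (Fin (2 * n) → ℝ) → (Fin (2 * n) → ℝ))
    (hps : ∀ γ : Set.Icc (0 : ℝ) 1 → ℂ, Continuous γ →
      (γ ⟨0, by norm_num⟩).im = 0 →
      (∃ I ∈ C, ∀ t, injE n I (γ t) ∈ Ω) →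
      ∃ F₁ F₂ : Fin (2 * n) → ℝ, ∀ I ∈ C, (∀ t, injE n I (γ t) ∈ Ω) →
        f (injE n I (γ ⟨1, by norm_num⟩)) = F₁ + I F₂) :
    ∃ F : ℂ → (Fin (2 * n) → ℝ) × (Fin (2 * n) → ℝ),
      ∀ z : ℂ, ∀ I ∈ C, injE n I z ∈ Ω →
        f (injE n I z) = (F z).1 + I ((F z).2) := by
  rcases subsingleton_or_nontrivial (Fin (2 * n) → ℝ) with hE | hE
  · exact ⟨0, fun _ _ _ _ => Subsingleton.elim _ _⟩
  suffices ∀ z, ∃ p : (Fin (2 * n) → ℝ) × (Fin (2 * n) → ℝ),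
      ∀ I ∈ C, injE n I z ∈ Ω → f (injE n I z) = p.1 + I p.2 by
    choose F hF using this
    exact ⟨F, hF⟩
  intro z
  by_cases hz : ∃ I₀ ∈ C, injE n I₀ z ∈ Ω
  swap
  · exact ⟨0, fun I hI h => (hz ⟨I, hI, h⟩).elim⟩
  obtain ⟨I₀, hI₀, hzΩ⟩ := hz
  set U := injE n I₀ ⁻¹' Ω
  have hU : ∀ J ∈ C, injE n J ⁻¹' Ω = U := fun J hJ =>
    Set.ext fun w => ⟨fun h => haxial w J hJ h I₀ hI₀, fun h => haxial w I₀ hI₀ h J hJ⟩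
  have hUconj : ∀ w ∈ U, conj w ∈ U := fun w hw => by
    simpa [U, injE_conj] using haxial w I₀ hI₀ hw (-I₀) (hCneg I₀ hI₀)
  have hΩ := @IsConnected.isPreconnected _ (sliceTopologyC n C) _ hconn
  have hUo : IsOpen U := isOpen_sliceTopologyC_iff.1 hopen I₀ hI₀
  obtain ⟨x₀, hx₀⟩ :=
    exists_ofReal_mem hC hΩ hU hUo hUconj hI₀ ⟨z, hzΩ⟩
  obtain ⟨γ, hγ⟩ : JoinedIn U x₀ z :=
    subset_pathComponentIn_ofReal hC hΩ hU hUo hUconj hI₀ hx₀ hzΩ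
  obtain ⟨F₁, F₂, hF⟩ := hps γ γ.continuous (by simp) ⟨I₀, hI₀, hγ⟩
  exact ⟨(F₁, F₂), fun I hI _ => by simpa using hF I hI fun t => haxial _ I₀ hI₀ (hγ t) I hI⟩
end
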